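/- arXiv:math/0401262 — 5 statements merged into one kernel-verified Lean document; each statement's English description precedes it below -/
import Mathlib

section
/- If A and B are subsets of {1,...,N} with |A|, |B| > 5·N^(1 - 1/(4(k-1))), then the sumset A+B contains a non-trivial k-term arithmetic progression (a sequence n, n+d, ..., n+(k-1)d with d ≠ 0). -/
set_option maxHeartbeats 1000000

open Pointwise Finset

theorem sumset_contains_long_ap (N k : ℕ) (hk : 3 ≤ k) (hN : 1 ≤ N)
    (A B : Finset ℤ) (hA : A ⊆ Finset.Icc 1 (N : ℤ)) (hB : B ⊆ Finset.Icc 1 (N : ℤ))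
    (hAcard : 5 * (N : ℝ) ^ ((1 : ℝ) - 1 / (4 * ((k : ℝ) - 1))) < A.card)
    (hBcard : 5 * (N : ℝ) ^ ((1 : ℝ) - 1 / (4 * ((k : ℝ) - 1))) < B.card) :
    ∃ n d : ℤ, d ≠ 0 ∧ ∀ i : ℕ, i < k → n + i * d ∈ A + B := by
  classical
  set m := k - 1 with hmdef
  have hm2 : 2 ≤ m := by omega
  have hm0 : 0 < m := by omega
  have hx1 : (1 : ℝ) ≤ (N : ℝ) := by exact_mod_cast hN
  have hx0 : (0 : ℝ) < (N : ℝ) := by linarith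
  -- Step 1: popular sum y
  have hmaps : ∀ p ∈ A ×ˢ B, p.1 + p.2 ∈ Finset.Icc (2 : ℤ) (2 * N) := by
    rintro ⟨a, b⟩ hp
    rw [Finset.mem_product] at hp
    have ha := hA hp.1
    have hb := hB hp.2
    rw [Finset.mem_Icc] at *
    omega
  have hIccN : #(Finset.Icc (2 : ℤ) (2 * N)) = 2 * N - 1 := by
    rw [Int.card_Icc]; omega
  have hIccNE : (Finset.Icc (2 : ℤ) (2 * N)).Nonempty := by
    refine ⟨2, ?_⟩; rw [Finset.mem_Icc]; omega
  have hsum : ∑ y ∈ Finset.Icc (2 : ℤ) (2 * N),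
      #{p ∈ A ×ˢ B | p.1 + p.2 = y} = #(A ×ˢ B) :=
    (Finset.card_eq_sum_card_fiberwise hmaps).symm
  obtain ⟨y, hy, hpop⟩ : ∃ y ∈ Finset.Icc (2 : ℤ) (2 * N),
      #(A ×ˢ B) ≤ (2 * N - 1) * #{p ∈ A ×ˢ B | p.1 + p.2 = y} := by
    apply Finset.exists_le_of_sum_le hIccNE
    rw [Finset.sum_const, ← Finset.mul_sum, hsum, hIccN, smul_eq_mul]
  set F := {p ∈ A ×ˢ B | p.1 + p.2 = y} with hFdef
  set C := F.image Prod.fst with hCdef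
  have hCF : #C = #F := by
    apply Finset.card_image_of_injOn
    intro p hp q hq hpq
    have h1 := (Finset.mem_filter.mp hp).2
    have h2 := (Finset.mem_filter.mp hq).2
    have : p.2 = q.2 := by omega
    exact Prod.ext hpq this
  have hCA : C ⊆ A := by
    intro x hx
    simp only [hCdef, Finset.mem_image] at hx
    obtain ⟨p, hp, rfl⟩ := hx
    simp only [hFdef, Finset.mem_filter, Finset.mem_product] at hp
    exact hp.1.1
  have hCB : ∀ x ∈ C, y - x ∈ B := by
    intro x hx
    simp only [hCdef, Finset.mem_image] at hx
    obtain ⟨p, hp, rfl⟩ := hx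
    simp only [hFdef, Finset.mem_filter, Finset.mem_product] at hp
    have : y - p.1 = p.2 := by omega
    rw [this]; exact hp.1.2
  -- Step 2: the cardinality bound  #C ^ m > (4N-2) ^ (m-1)
  have hmR : ((m : ℝ)) = (k : ℝ) - 1 := by
    rw [hmdef]; push_cast [Nat.cast_sub (by omega : 1 ≤ k)]; ring
  have hmR0 : (0 : ℝ) < (m : ℝ) := by exact_mod_cast hm0
  have hmR1 : (1 : ℝ) ≤ (m : ℝ) := by exact_mod_cast hm0
  rw [show (k:ℝ) - 1 = (m:ℝ) from hmR.symm] at hAcard hBcard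
  have hAB : 25 * (N : ℝ) ^ ((2 : ℝ) - 1 / (2 * (m : ℝ))) < (A.card : ℝ) * B.card := by
    have h1 : (5 * (N : ℝ) ^ ((1 : ℝ) - 1 / (4 * (m : ℝ)))) *
        (5 * (N : ℝ) ^ ((1 : ℝ) - 1 / (4 * (m : ℝ)))) < (A.card : ℝ) * B.card := by
      apply mul_lt_mul'' hAcard hBcard (by positivity) (by positivity)
    have hee : (2 : ℝ) - 1 / (2 * (m : ℝ))
        = ((1 : ℝ) - 1 / (4 * (m : ℝ))) + ((1 : ℝ) - 1 / (4 * (m : ℝ))) := by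
      field_simp
      ring
    calc 25 * (N : ℝ) ^ ((2 : ℝ) - 1 / (2 * (m : ℝ)))
        = (5 * (N : ℝ) ^ ((1 : ℝ) - 1 / (4 * (m : ℝ)))) *
          (5 * (N : ℝ) ^ ((1 : ℝ) - 1 / (4 * (m : ℝ)))) := by
          rw [hee, Real.rpow_add hx0]; ring
      _ < (A.card : ℝ) * B.card := h1
  have hCb : (12.5 : ℝ) * (N : ℝ) ^ ((1 : ℝ) - 1 / ((m : ℝ))) < (#C : ℝ) := by
    have hcast : ((A.card * B.card : ℕ) : ℝ) ≤ ((2 * N - 1 : ℕ) : ℝ) * (#C : ℝ) := by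
      rw [hCF]
      exact_mod_cast by
        calc A.card * B.card = #(A ×ˢ B) := (Finset.card_product A B).symm
          _ ≤ (2 * N - 1) * #F := hpop
    have h2N : ((2 * N - 1 : ℕ) : ℝ) ≤ 2 * (N : ℝ) := by
      push_cast [Nat.cast_sub (by omega : 1 ≤ 2 * N)]; linarith
    have hC0 : (0 : ℝ) ≤ (#C : ℝ) := by positivity
    have h3 : 25 * (N : ℝ) ^ ((2 : ℝ) - 1 / (2 * (m : ℝ))) < 2 * (N : ℝ) * (#C : ℝ) := by
      push_cast at hcast
      nlinarith [hAB]
    have hm1 : 1 / (2 * (m : ℝ)) ≤ 1 := by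
      rw [div_le_one (by linarith)]
      linarith [hmR1]
    have hsplit : (N : ℝ) ^ ((2 : ℝ) - 1 / (2 * (m : ℝ)))
        = (N : ℝ) * (N : ℝ) ^ ((1 : ℝ) - 1 / (2 * (m : ℝ))) := by
      rw [show (2 : ℝ) - 1 / (2 * (m : ℝ)) = 1 + ((1:ℝ) - 1 / (2 * (m : ℝ))) by ring]
      exact Real.rpow_one_add' (le_of_lt hx0) (by intro h; linarith)
    have h4 : (12.5 : ℝ) * (N : ℝ) ^ ((1 : ℝ) - 1 / (2 * (m : ℝ))) < (#C : ℝ) := by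
      rw [hsplit] at h3
      have := mul_lt_mul_of_pos_left h3 (by positivity : (0:ℝ) < 1 / (2 * (N:ℝ)))
      calc (12.5 : ℝ) * (N : ℝ) ^ ((1 : ℝ) - 1 / (2 * (m : ℝ)))
          = 1 / (2 * (N:ℝ)) * (25 * ((N:ℝ) * (N : ℝ) ^ ((1 : ℝ) - 1 / (2 * (m : ℝ))))) := by
            field_simp; ring
        _ < 1 / (2 * (N:ℝ)) * (2 * (N : ℝ) * (#C : ℝ)) := this
        _ = (#C : ℝ) := by field_simp
    have h5 : (N : ℝ) ^ ((1 : ℝ) - 1 / ((m : ℝ))) ≤ (N : ℝ) ^ ((1 : ℝ) - 1 / (2 * (m : ℝ))) := by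
      apply Real.rpow_le_rpow_of_exponent_le hx1
      have : 1 / (2 * (m : ℝ)) ≤ 1 / (m : ℝ) := by
        apply div_le_div_of_nonneg_left (by norm_num) hmR0
        linarith
      linarith
    nlinarith [Real.rpow_nonneg (le_of_lt hx0) ((1 : ℝ) - 1 / ((m : ℝ)))]
  have hkey : (4 * N - 2) ^ (m - 1) < #C ^ m := by
    have hR : ((4 * N - 2 : ℕ) : ℝ) ^ (m - 1) < ((#C : ℕ) : ℝ) ^ m := by
      have hbase : ((4 * N - 2 : ℕ) : ℝ) ≤ 4 * (N : ℝ) := by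
        push_cast [Nat.cast_sub (by omega : 2 ≤ 4 * N)]; linarith
      have hbase0 : (0 : ℝ) ≤ ((4 * N - 2 : ℕ) : ℝ) := by positivity
      have e1 : ((4 * N - 2 : ℕ) : ℝ) ^ (m - 1) ≤ (4 * (N : ℝ)) ^ (m - 1) :=
        pow_le_pow_left₀ hbase0 hbase _
      have e2 : (4 * (N : ℝ)) ^ (m - 1) = 4 ^ (m - 1) * (N : ℝ) ^ (m - 1) := by
        rw [mul_pow]
      have e3 : ((N : ℝ) ^ ((1 : ℝ) - 1 / ((m : ℝ)))) ^ m = (N : ℝ) ^ (m - 1) := by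
        rw [← Real.rpow_natCast ((N : ℝ) ^ ((1 : ℝ) - 1 / ((m : ℝ)))) m,
          ← Real.rpow_mul (le_of_lt hx0)]
        have : ((1 : ℝ) - 1 / ((m : ℝ))) * (m : ℕ) = ((m - 1 : ℕ) : ℝ) := by
          push_cast [Nat.cast_sub (by omega : 1 ≤ m)]
          field_simp
        rw [this, Real.rpow_natCast]
      have e4 : (12.5 : ℝ) ^ m * ((N : ℝ) ^ ((1 : ℝ) - 1 / ((m : ℝ)))) ^ m
          ≤ ((#C : ℕ) : ℝ) ^ m := by
        rw [← mul_pow]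
        apply pow_le_pow_left₀ (by positivity) (le_of_lt hCb)
      have e5 : (4 : ℝ) ^ (m - 1) * (N : ℝ) ^ (m - 1) < (12.5 : ℝ) ^ m * (N : ℝ) ^ (m - 1) := by
        apply mul_lt_mul_of_pos_right _ (by positivity)
        calc (4 : ℝ) ^ (m - 1) ≤ (12.5 : ℝ) ^ (m - 1) :=
              pow_le_pow_left₀ (by norm_num) (by norm_num) _
          _ < (12.5 : ℝ) ^ m := by
              apply pow_lt_pow_right₀ (by norm_num)
              omega
      calc ((4 * N - 2 : ℕ) : ℝ) ^ (m - 1) ≤ 4 ^ (m - 1) * (N : ℝ) ^ (m - 1) := by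
            rw [← e2]; exact e1
        _ < (12.5 : ℝ) ^ m * (N : ℝ) ^ (m - 1) := e5
        _ = (12.5 : ℝ) ^ m * ((N : ℝ) ^ ((1 : ℝ) - 1 / ((m : ℝ)))) ^ m := by rw [e3]
        _ ≤ ((#C : ℕ) : ℝ) ^ m := e4
    exact_mod_cast hR
  -- Step 3: pigeonhole on m-tuples of C
  set T := Fintype.piFinset (fun _ : Fin m => C) with hTdef
  set U := Fintype.piFinset (fun _ : Fin (m - 1) =>
    Finset.Icc (1 - 2 * (N : ℤ)) (2 * (N : ℤ) - 2)) with hUdef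
  have hTcard : #T = #C ^ m := by
    rw [hTdef, Fintype.card_piFinset_const]
  have hUcard : #U = (4 * N - 2) ^ (m - 1) := by
    rw [hUdef, Fintype.card_piFinset_const, Int.card_Icc]
    congr 1
    omega
  set Ψ : (Fin m → ℤ) → (Fin (m - 1) → ℤ) := fun a j =>
    a ⟨j.1 + 1, by have := j.2; omega⟩ - a ⟨j.1, by have := j.2; omega⟩
      - a ⟨0, by omega⟩ with hΨdef
  have hΨmaps : ∀ a ∈ T, Ψ a ∈ U := by
    intro a haT
    rw [hTdef, Fintype.mem_piFinset] at haT
    rw [hUdef, Fintype.mem_piFinset]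
    intro j
    have b1 := hA (hCA (haT ⟨j.1 + 1, by have := j.2; omega⟩))
    have b2 := hA (hCA (haT ⟨j.1, by have := j.2; omega⟩))
    have b3 := hA (hCA (haT ⟨0, by omega⟩))
    rw [Finset.mem_Icc] at *
    simp only [hΨdef]
    omega
  obtain ⟨a, haT, c, hcT, hac, hΨeq⟩ :
      ∃ a ∈ T, ∃ c ∈ T, a ≠ c ∧ Ψ a = Ψ c := by
    apply Finset.exists_ne_map_eq_of_card_lt_of_maps_to _ hΨmaps
    rw [hTcard, hUcard]; exact hkey
  have haC : ∀ j : Fin m, a j ∈ C := fun j => (Fintype.mem_piFinset.mp haT) j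
  have hcC : ∀ j : Fin m, c j ∈ C := fun j => (Fintype.mem_piFinset.mp hcT) j
  set d : ℤ := a ⟨0, by omega⟩ - c ⟨0, by omega⟩ with hddef
  have hmul : ∀ i : ℕ, ∀ h : i < m, a ⟨i, h⟩ - c ⟨i, h⟩ = (i + 1 : ℤ) * d := by
    intro i
    induction i with
    | zero => intro h; rw [hddef]; push_cast; ring
    | succ i ih =>
      intro h
      have hi : i < m - 1 := by omega
      have him : i < m := by omega
      have := congrFun hΨeq ⟨i, hi⟩
      simp only [hΨdef] at this
      have hih := ih him
      -- Fin.mk values line up definitionally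
      have h1 : a ⟨i + 1, h⟩ - c ⟨i + 1, h⟩
          = (a ⟨i, him⟩ - c ⟨i, him⟩) + (a ⟨0, by omega⟩ - c ⟨0, by omega⟩) := by
        omega
      rw [h1, hih, ← hddef]
      push_cast
      ring
  have hd0 : d ≠ 0 := by
    intro hd
    apply hac
    funext j
    have := hmul j.1 j.2
    rw [hd, mul_zero] at this
    have hj : a ⟨j.1, j.2⟩ = c ⟨j.1, j.2⟩ := by omega
    simpa using hj
  refine ⟨y, d, hd0, ?_⟩
  intro i hik
  match i, hik with
  | 0, _ =>
    have hx := haC ⟨0, by omega⟩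
    have : y + (0 : ℕ) * d = a ⟨0, by omega⟩ + (y - a ⟨0, by omega⟩) := by push_cast; ring
    rw [this]
    exact Finset.add_mem_add (hCA hx) (hCB _ hx)
  | (j + 1), hik =>
    have hjm : j < m := by omega
    have hmulj := hmul j hjm
    have : y + ((j + 1 : ℕ) : ℤ) * d = a ⟨j, hjm⟩ + (y - c ⟨j, hjm⟩) := by
      push_cast
      push_cast at hmulj
      linarith
    rw [this]
    exact Finset.add_mem_add (hCA (haC _)) (hCB _ (hcC _))
end

section
/- For any subset D of ℤ/mℤ with m odd, there exists ℓ ∈ ℤ/mℤ such that the intersection (D+ℓ) ∩ (-(D+ℓ)) has size at least |D|²/m. -/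
/-!
`∑ ℓ, |(D + ℓ) ∩ -(D + ℓ)|` counts the pairs `(ℓ, x)` with `x - ℓ ∈ D` and `-x - ℓ ∈ D`. In a
group of odd order doubling is injective, so `(ℓ, x) ↦ (x - ℓ, -x - ℓ)` is a bijection of `G × G`
(the two coordinates add up to `-2ℓ` and differ by `2x`); hence the count is `|D|²`, and some `ℓ`
is at least the average `|D|² / |G|`.
-/

open Finset

variable {G : Type*} [AddCommGroup G] [DecidableEq G]

lemma mem_image_add_inter_image_neg_add {D : Finset G} {ℓ x : G} :
    x ∈ D.image (· + ℓ) ∩ D.image (fun d => -(d + ℓ)) ↔ x - ℓ ∈ D ∧ -x - ℓ ∈ D := by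
  simp only [mem_inter, mem_image]
  constructor
  · rintro ⟨⟨a, ha, rfl⟩, b, hb, hab⟩
    refine ⟨by simpa using ha, ?_⟩
    rwa [← hab, neg_neg, add_sub_cancel_right]
  · rintro ⟨h₁, h₂⟩
    exact ⟨⟨x - ℓ, h₁, sub_add_cancel x ℓ⟩, -x - ℓ, h₂, by abel⟩

variable [Fintype G]

noncomputable def translateReflectEquiv (hG : Odd (Nat.card G)) : G × G ≃ G × G :=
  Equiv.ofBijective (fun p => (p.2 - p.1, -p.2 - p.1)) <| Finite.injective_iff_bijective.mp <| by
    have hdouble := (Nat.Coprime.nsmul_right_bijective (Nat.coprime_two_right.mpr hG)).injective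
    rintro ⟨ℓ, x⟩ ⟨ℓ', x'⟩ h
    simp only [Prod.mk.injEq] at h
    have hℓ : ℓ = ℓ' := hdouble <| by
      simpa [two_nsmul, neg_add_rev] using congrArg Neg.neg (congrArg₂ (· + ·) h.1 h.2)
    subst hℓ
    simp_all

lemma sum_card_image_add_inter_image_neg_add (hG : Odd (Nat.card G)) (D : Finset G) :
    ∑ ℓ, #(D.image (· + ℓ) ∩ D.image (fun d => -(d + ℓ))) = #D ^ 2 := by
  calc ∑ ℓ, #(D.image (· + ℓ) ∩ D.image (fun d => -(d + ℓ)))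
      = #{p : G × G | p.2 - p.1 ∈ D ∧ -p.2 - p.1 ∈ D} := by
        rw [card_filter, Fintype.sum_prod_type]
        refine sum_congr rfl fun ℓ _ => ?_
        rw [← card_filter]
        congr 1
        ext x
        simp only [mem_image_add_inter_image_neg_add, mem_filter, mem_univ, true_and]
    _ = #(D ×ˢ D) := card_equiv (translateReflectEquiv hG) fun p => by
        simp [translateReflectEquiv]
    _ = #D ^ 2 := by rw [card_product, sq]

theorem exists_translate_symmetric_inter_of_odd_card (hG : Odd (Nat.card G)) (D : Finset G) :
    ∃ ℓ : G, (#D : ℝ) ^ 2 / Nat.card G ≤ #(D.image (· + ℓ) ∩ D.image (fun d => -(d + ℓ))) := by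
  have hcard : (Nat.card G : ℝ) ≠ 0 := by exact_mod_cast Nat.card_pos.ne'
  obtain ⟨ℓ, -, hℓ⟩ := exists_le_of_sum_le (univ_nonempty (α := G))
    (f := fun _ => (#D : ℝ) ^ 2 / Nat.card G)
    (g := fun ℓ => (#(D.image (· + ℓ) ∩ D.image (fun d => -(d + ℓ))) : ℝ)) <| by
      rw [sum_const, card_univ, ← Nat.card_eq_fintype_card, nsmul_eq_mul, mul_div_cancel₀ _ hcard,
        ← Nat.cast_sum, sum_card_image_add_inter_image_neg_add hG, Nat.cast_pow]
  exact ⟨ℓ, hℓ⟩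

theorem exists_translate_symmetric_inter (m : ℕ) (hm : 0 < m) (hodd : Odd m)
    (D : Finset (ZMod m)) :
    ∃ ℓ : ZMod m,
      (D.card : ℝ) ^ 2 / m ≤ ((D.image (· + ℓ)) ∩ (D.image (fun d => -(d + ℓ)))).card := by
  have : NeZero m := ⟨hm.ne'⟩
  simpa only [Nat.card_zmod] using
    exists_translate_symmetric_inter_of_odd_card (by rwa [Nat.card_zmod]) D
end

section
/- Let C ⊆ ℤ/mℤ be symmetric (C = -C) with |C| > m^{(k-2)/(k-1)}. Then the number of pairs ((y₁,...,y_k),(z₁,...,z_k)) ∈ C^k × C^k satisfying y_i + y_{i+2} - 2y_{i+1} ≡ z_i + z_{i+2} - 2z_{i+1} (mod m) for all i = 1,...,k-2 strictly exceeds |C|^{k+1}. -/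
/-!
Group the tuples `y ∈ C^k` by their vector of second differences, which lives in
`(ℤ/mℤ)^(k-2)`. The solutions are exactly the pairs in a common fibre, so their number is the sum
of the squared fibre sizes, and Cauchy–Schwarz bounds it below by `|C|^(2k) / m^(k-2)`. This
exceeds `|C|^(k+1)` precisely when `m^(k-2) < |C|^(k-1)`.
-/

open Finset

namespace Finset

variable {α β : Type*} [DecidableEq β]

theorem card_filter_product_eq_sum_sq {s : Finset α} {t : Finset β} {f : α → β}
    (hf : Set.MapsTo f s t) :
    #{p ∈ s ×ˢ s | f p.1 = f p.2} = ∑ b ∈ t, #{a ∈ s | f a = b} ^ 2 := by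
  rw [card_eq_sum_card_fiberwise (f := fun p : α × α => f p.1)
    (fun p hp => hf (mem_product.1 (mem_filter.1 hp).1).1)]
  refine sum_congr rfl fun b _ => ?_
  rw [sq, ← card_product]
  congr 1
  ext ⟨x, y⟩
  simp only [mem_filter, mem_product]
  grind

theorem sq_card_le_card_mul_card_filter_product {s : Finset α} {t : Finset β} {f : α → β}
    (hf : Set.MapsTo f s t) :
    #s ^ 2 ≤ #t * #{p ∈ s ×ˢ s | f p.1 = f p.2} := by
  rw [card_filter_product_eq_sum_sq hf, card_eq_sum_card_fiberwise hf]
  exact sq_sum_le_card_mul_sum_sq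

end Finset

def secondDiff {R : Type*} [Ring R] {k : ℕ} (y : Fin k → R) (j : Fin (k - 2)) : R :=
  y ⟨j, by omega⟩ + y ⟨j + 2, by omega⟩ - 2 * y ⟨j + 1, by omega⟩

theorem forall_secondDiff_eq_iff {R : Type*} [Ring R] {k : ℕ} (y z : Fin k → R) :
    (∀ i : Fin k, ∀ h : (i : ℕ) + 2 < k,
      y i + y ⟨i + 2, h⟩ - 2 * y ⟨i + 1, by omega⟩ =
        z i + z ⟨i + 2, h⟩ - 2 * z ⟨i + 1, by omega⟩) ↔
      secondDiff y = secondDiff z := by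
  constructor
  · intro h
    funext j
    exact h ⟨j, by omega⟩ (by simp only; omega)
  · intro h i hi
    exact congrFun h ⟨i, by omega⟩

theorem Nat.pow_lt_of_pow_add_le_mul {a b N p q : ℕ} (hq : q ≠ 0) (hb : b < a ^ q)
    (h : a ^ (p + q) ≤ b * N) : a ^ p < N := by
  have ha : 0 < a := Nat.pos_of_ne_zero fun ha => by simp [ha, hq] at hb
  refine Nat.lt_of_mul_lt_mul_left (a := b) ?_
  calc b * a ^ p < a ^ q * a ^ p := Nat.mul_lt_mul_of_pos_right hb (Nat.pow_pos ha)
    _ = a ^ (p + q) := by rw [pow_add, mul_comm]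
    _ ≤ b * N := h

open Classical in
theorem solution_count_exceeds_trivial (m k : ℕ) (hm : 0 < m) (hk : 3 ≤ k)
    (C : Finset (ZMod m))
    (hcard : m ^ (k - 2) < C.card ^ (k - 1)) :
    C.card ^ (k + 1) <
      (((Fintype.piFinset fun _ : Fin k => C) ×ˢ (Fintype.piFinset fun _ : Fin k => C)).filter
        (fun p => ∀ i : Fin k, ∀ h : (i : ℕ) + 2 < k,
          p.1 i + p.1 ⟨i + 2, h⟩ - 2 * p.1 ⟨i + 1, by omega⟩ =
            p.2 i + p.2 ⟨i + 2, h⟩ - 2 * p.2 ⟨i + 1, by omega⟩)).card := by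
  have : NeZero m := ⟨hm.ne'⟩
  set A := Fintype.piFinset fun _ : Fin k => C
  have hcs := sq_card_le_card_mul_card_filter_product (s := A) (f := secondDiff)
    (t := univ) fun _ _ => mem_univ _
  rw [card_univ, Fintype.card_fun, ZMod.card, Fintype.card_fin, Fintype.card_piFinset_const,
    ← pow_mul, ← filter_congr fun p _ => forall_secondDiff_eq_iff p.1 p.2] at hcs
  refine Nat.pow_lt_of_pow_add_le_mul (by omega) hcard ?_
  convert hcs using 2
  omega
end

section
/- Let A, B ⊆ {1,...,N} with |A|, |B| > 5·N^{1 - 1/(4(k-1))}. Then there exists a set C of residues modulo 4N+1 such that: (1) |C| > 5·N^{1 - 1/(k-1)}; (2) C = -C modulo 4N+1; and (3) the set of residues occupied by C+C is a translate of a subset of the residues occupied by A+B modulo 4N+1. -/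
open Pointwise

private lemma pigeon_aux {α : Type*} [Fintype α] [Nonempty α] (f : α → ℕ) :
    ∃ x : α, ∑ y : α, f y ≤ Fintype.card α * f x := by
  by_contra h
  push_neg at h
  have h2 : ∑ x : α, Fintype.card α * f x < ∑ _x : α, ∑ y : α, f y :=
    Finset.sum_lt_sum_of_nonempty Finset.univ_nonempty (fun i _ => h i)
  rw [Finset.sum_const, ← Finset.mul_sum, Finset.card_univ, smul_eq_mul] at h2
  exact lt_irrefl _ h2

theorem main_lemma (N k : ℕ) (hk : 3 ≤ k) (hN : 0 < N)
    (A B : Finset ℤ) (hA : A ⊆ Finset.Icc 1 (N : ℤ)) (hB : B ⊆ Finset.Icc 1 (N : ℤ))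
    (hAcard : 5 * (N : ℝ) ^ ((1 : ℝ) - 1 / (4 * ((k : ℝ) - 1))) < A.card)
    (hBcard : 5 * (N : ℝ) ^ ((1 : ℝ) - 1 / (4 * ((k : ℝ) - 1))) < B.card) :
    ∃ C : Finset (ZMod (4 * N + 1)),
      (5 * (N : ℝ) ^ ((1 : ℝ) - 1 / ((k : ℝ) - 1)) < C.card) ∧
      (∀ c ∈ C, -c ∈ C) ∧
      (∃ t : ZMod (4 * N + 1),
        C + C ⊆ ((A + B).image (Int.cast : ℤ → ZMod (4 * N + 1))).image (· + t)) := by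
  classical
  haveI hNZ : NeZero (4 * N + 1) := ⟨by omega⟩
  set q : ℕ := 4 * N + 1 with hqdef
  have hqZ : (q : ℤ) = 4 * (N : ℤ) + 1 := by rw [hqdef]; push_cast; ring
  -- injectivity of the cast on [1, N]
  have hinj : ∀ a ∈ Finset.Icc (1:ℤ) (N:ℤ), ∀ b ∈ Finset.Icc (1:ℤ) (N:ℤ),
      ((a : ZMod q) = (b : ZMod q)) → a = b := by
    intro a ha b hb hab
    simp only [Finset.mem_Icc] at ha hb
    have h0 : ((a - b : ℤ) : ZMod q) = 0 := by push_cast; rw [hab]; ring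
    rw [ZMod.intCast_zmod_eq_zero_iff_dvd] at h0
    obtain ⟨c, hc⟩ := h0
    rw [hqZ] at hc
    have hc1 : c < 1 := by nlinarith [ha.1, ha.2, hb.1, hb.2]
    have hc2 : -1 < c := by nlinarith [ha.1, ha.2, hb.1, hb.2]
    have hc0 : c = 0 := by omega
    rw [hc0, mul_zero] at hc
    linarith
  set A' : Finset (ZMod q) := A.image (Int.cast : ℤ → ZMod q) with hA'def
  set B' : Finset (ZMod q) := B.image (Int.cast : ℤ → ZMod q) with hB'def
  have hA'card : A'.card = A.card := Finset.card_image_of_injOn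
    (fun a ha b hb hh => hinj a (hA (Finset.mem_coe.mp ha)) b (hA (Finset.mem_coe.mp hb)) hh)
  have hB'card : B'.card = B.card := Finset.card_image_of_injOn
    (fun a ha b hb hh => hinj a (hB (Finset.mem_coe.mp ha)) b (hB (Finset.mem_coe.mp hb)) hh)
  have hcardZ : Fintype.card (ZMod q) = q := ZMod.card q
  -- First averaging: choose x with many representations
  have hsum1 : (A' ×ˢ B').card =
      ∑ x : ZMod q, ((A' ×ˢ B').filter (fun p => p.1 - p.2 = x)).card :=
    Finset.card_eq_sum_card_fiberwise (fun p _ => Finset.mem_univ _)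
  have hfib1 : ∀ x : ZMod q, ((A' ×ˢ B').filter (fun p => p.1 - p.2 = x)).card =
      (B'.filter (fun b => b + x ∈ A')).card := by
    intro x
    apply Finset.card_bij (fun p _ => p.2)
    · intro p hp
      simp only [Finset.mem_filter, Finset.mem_product] at hp ⊢
      refine ⟨hp.1.2, ?_⟩
      have e1 : p.1 = x + p.2 := by rw [← hp.2]; ring
      have e2 : p.2 + x = p.1 := by rw [e1]; ring
      rw [e2]; exact hp.1.1
    · intro p hp p' hp' hpp
      simp only [Finset.mem_filter, Finset.mem_product] at hp hp'
      have e1 : p.1 = x + p.2 := by rw [← hp.2]; ring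
      have e1' : p'.1 = x + p'.2 := by rw [← hp'.2]; ring
      have : p.1 = p'.1 := by rw [e1, e1', hpp]
      exact Prod.ext this hpp
    · intro b hb
      simp only [Finset.mem_filter] at hb
      refine ⟨(b + x, b), ?_, rfl⟩
      simp only [Finset.mem_filter, Finset.mem_product]
      exact ⟨⟨hb.2, hb.1⟩, by ring⟩
  obtain ⟨x, hx⟩ := pigeon_aux (fun x : ZMod q => (B'.filter (fun b => b + x ∈ A')).card)
  set E : Finset (ZMod q) := B'.filter (fun b => b + x ∈ A') with hEdef
  have hE1 : A.card * B.card ≤ q * E.card := by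
    have : ∑ y : ZMod q, (B'.filter (fun b => b + y ∈ A')).card = A'.card * B'.card := by
      rw [← Finset.card_product]
      rw [hsum1]
      exact Finset.sum_congr rfl (fun y _ => (hfib1 y).symm)
    rw [this, hcardZ, hA'card, hB'card] at hx
    exact hx
  have hEB : ∀ e ∈ E, e ∈ B' ∧ e + x ∈ A' := by
    intro e he
    simpa only [hEdef, Finset.mem_filter] using he
  -- the inverse of 2 mod q
  have hodd : Odd q := ⟨2 * N, by omega⟩
  have hcop : Nat.Coprime 2 q := Nat.coprime_two_left.mpr hodd
  have hu : IsUnit (2 : ZMod q) := by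
    have := (ZMod.isUnit_iff_coprime 2 q).mpr hcop
    simpa using this
  obtain ⟨v, hv⟩ := hu
  set i2 : ZMod q := ((v⁻¹ : (ZMod q)ˣ) : ZMod q) with hi2def
  have h2i : (2 : ZMod q) * i2 = 1 := by rw [← hv, hi2def]; exact v.mul_inv
  -- Second averaging
  have hsum2 : (E ×ˢ E).card =
      ∑ u : ZMod q, ((E ×ˢ E).filter (fun p => (p.1 + p.2) * i2 = u)).card :=
    Finset.card_eq_sum_card_fiberwise (fun p _ => Finset.mem_univ _)
  have hfib2 : ∀ u : ZMod q, ((E ×ˢ E).filter (fun p => (p.1 + p.2) * i2 = u)).card =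
      (Finset.univ.filter (fun z : ZMod q => z + u ∈ E ∧ u - z ∈ E)).card := by
    intro u
    have key1 : ∀ p : ZMod q × ZMod q, (p.1 + p.2) * i2 = u →
        (p.1 - p.2) * i2 + u = p.1 := by
      intro p hp
      rw [← hp]
      linear_combination p.1 * h2i
    have key2 : ∀ p : ZMod q × ZMod q, (p.1 + p.2) * i2 = u →
        u - (p.1 - p.2) * i2 = p.2 := by
      intro p hp
      rw [← hp]
      linear_combination p.2 * h2i
    apply Finset.card_bij (fun p _ => (p.1 - p.2) * i2)
    · intro p hp
      simp only [Finset.mem_filter, Finset.mem_product] at hp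
      simp only [Finset.mem_filter, Finset.mem_univ, true_and]
      rw [key1 p hp.2, key2 p hp.2]
      exact ⟨hp.1.1, hp.1.2⟩
    · intro p hp p' hp' hpp
      simp only [Finset.mem_filter, Finset.mem_product] at hp hp'
      have e1 : p.1 = p'.1 := by
        rw [← key1 p hp.2, ← key1 p' hp'.2, hpp]
      have e2 : p.2 = p'.2 := by
        rw [← key2 p hp.2, ← key2 p' hp'.2, hpp]
      exact Prod.ext e1 e2
    · intro z hz
      simp only [Finset.mem_filter, Finset.mem_univ, true_and] at hz
      refine ⟨(z + u, u - z), ?_, by linear_combination z * h2i⟩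
      simp only [Finset.mem_filter, Finset.mem_product]
      exact ⟨⟨hz.1, hz.2⟩, by linear_combination u * h2i⟩
  obtain ⟨u, hu2⟩ := pigeon_aux
    (fun u : ZMod q => (Finset.univ.filter (fun z : ZMod q => z + u ∈ E ∧ u - z ∈ E)).card)
  set C : Finset (ZMod q) := Finset.univ.filter (fun z : ZMod q => z + u ∈ E ∧ u - z ∈ E)
    with hCdef
  have hE2 : E.card * E.card ≤ q * C.card := by
    have : ∑ y : ZMod q,
        (Finset.univ.filter (fun z : ZMod q => z + y ∈ E ∧ y - z ∈ E)).card
        = E.card * E.card := by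
      rw [← Finset.card_product, hsum2]
      exact Finset.sum_congr rfl (fun y _ => (hfib2 y).symm)
    rw [this, hcardZ] at hu2
    exact hu2
  refine ⟨C, ?_, ?_, ?_⟩
  · -- cardinality bound
    have hn : (0 : ℝ) < (N : ℝ) := by exact_mod_cast hN
    have hn1 : (1 : ℝ) ≤ (N : ℝ) := by exact_mod_cast hN
    have hk3 : (3 : ℝ) ≤ (k : ℝ) := by exact_mod_cast hk
    set β : ℝ := 1 / (4 * ((k : ℝ) - 1)) with hβdef
    have hexp : (1 : ℝ) - 1 / ((k : ℝ) - 1) = 1 - 4 * β := by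
      rw [hβdef]
      have : (k : ℝ) - 1 ≠ 0 := by linarith
      field_simp
    have h1R : (A.card : ℝ) * (B.card : ℝ) ≤ (q : ℝ) * (E.card : ℝ) := by
      exact_mod_cast hE1
    have h2R : (E.card : ℝ) * (E.card : ℝ) ≤ (q : ℝ) * (C.card : ℝ) := by
      exact_mod_cast hE2
    have hq5 : (q : ℝ) ≤ 5 * (N : ℝ) := by
      rw [hqdef]; push_cast; linarith
    have hq0 : (0 : ℝ) < (q : ℝ) := by
      rw [hqdef]; push_cast; linarith
    have hpow1 : (N : ℝ) ^ ((1 : ℝ) - β) * (N : ℝ) ^ ((1 : ℝ) - β)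
        = (N : ℝ) ^ ((2 : ℝ) - 2 * β) := by
      rw [← Real.rpow_add hn]; ring_nf
    have hab : 25 * (N : ℝ) ^ ((2 : ℝ) - 2 * β) < (A.card : ℝ) * (B.card : ℝ) := by
      have h5 : (0 : ℝ) ≤ 5 * (N : ℝ) ^ ((1 : ℝ) - β) := by positivity
      have := mul_lt_mul'' hAcard hBcard h5 h5
      calc 25 * (N : ℝ) ^ ((2 : ℝ) - 2 * β)
          = (5 * (N : ℝ) ^ ((1 : ℝ) - β)) * (5 * (N : ℝ) ^ ((1 : ℝ) - β)) := by
            rw [← hpow1]; ring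
        _ < (A.card : ℝ) * (B.card : ℝ) := this
    have hpow2 : (N : ℝ) ^ ((2 : ℝ) - 2 * β) * (N : ℝ) ^ ((2 : ℝ) - 2 * β)
        = (N : ℝ) ^ ((4 : ℝ) - 4 * β) := by
      rw [← Real.rpow_add hn]; ring_nf
    have hpow3 : (N : ℝ) ^ (3 : ℝ) * (N : ℝ) ^ ((1 : ℝ) - 4 * β)
        = (N : ℝ) ^ ((4 : ℝ) - 4 * β) := by
      rw [← Real.rpow_add hn]; ring_nf
    have hcube : 625 * (N : ℝ) ^ ((4 : ℝ) - 4 * β) < (q : ℝ) ^ 3 * (C.card : ℝ) := by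
      have hEnn : (0 : ℝ) ≤ (E.card : ℝ) := Nat.cast_nonneg _
      have step1 : (25 * (N : ℝ) ^ ((2 : ℝ) - 2 * β)) * (25 * (N : ℝ) ^ ((2 : ℝ) - 2 * β))
          < ((q : ℝ) * (E.card : ℝ)) * ((q : ℝ) * (E.card : ℝ)) := by
        have h0 : (0 : ℝ) ≤ 25 * (N : ℝ) ^ ((2 : ℝ) - 2 * β) := by positivity
        exact mul_self_lt_mul_self h0 (lt_of_lt_of_le hab h1R)
      have step2 : ((q : ℝ) * (E.card : ℝ)) * ((q : ℝ) * (E.card : ℝ))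
          ≤ (q : ℝ) ^ 3 * (C.card : ℝ) := by
        have h22 : (q : ℝ) ^ 2 * ((E.card : ℝ) * (E.card : ℝ))
            ≤ (q : ℝ) ^ 2 * ((q : ℝ) * (C.card : ℝ)) :=
          mul_le_mul_of_nonneg_left h2R (sq_nonneg _)
        calc ((q : ℝ) * (E.card : ℝ)) * ((q : ℝ) * (E.card : ℝ))
            = (q : ℝ) ^ 2 * ((E.card : ℝ) * (E.card : ℝ)) := by ring
          _ ≤ (q : ℝ) ^ 2 * ((q : ℝ) * (C.card : ℝ)) := h22
          _ = (q : ℝ) ^ 3 * (C.card : ℝ) := by ring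
      calc 625 * (N : ℝ) ^ ((4 : ℝ) - 4 * β)
          = (25 * (N : ℝ) ^ ((2 : ℝ) - 2 * β)) * (25 * (N : ℝ) ^ ((2 : ℝ) - 2 * β)) := by
            rw [← hpow2]; ring
        _ < ((q : ℝ) * (E.card : ℝ)) * ((q : ℝ) * (E.card : ℝ)) := step1
        _ ≤ (q : ℝ) ^ 3 * (C.card : ℝ) := step2
    have hq3 : (q : ℝ) ^ 3 ≤ 125 * (N : ℝ) ^ (3 : ℝ) := by
      have h1 : (q : ℝ) ^ 3 ≤ (5 * (N : ℝ)) ^ 3 := by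
        apply pow_le_pow_left₀ (le_of_lt hq0) hq5
      have h2 : ((N : ℝ)) ^ (3 : ℝ) = (N : ℝ) ^ (3 : ℕ) := by
        rw [← Real.rpow_natCast (N : ℝ) 3]; norm_num
      rw [h2]
      calc (q : ℝ) ^ 3 ≤ (5 * (N : ℝ)) ^ 3 := h1
        _ = 125 * (N : ℝ) ^ (3 : ℕ) := by ring
    rw [hexp]
    -- 5 * N^(1-4β) * q^3 ≤ 625 N^(4-4β) < q^3 * C
    have hfinal : 5 * (N : ℝ) ^ ((1 : ℝ) - 4 * β) * (q : ℝ) ^ 3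
        < (C.card : ℝ) * (q : ℝ) ^ 3 := by
      have hpos : (0 : ℝ) ≤ 5 * (N : ℝ) ^ ((1 : ℝ) - 4 * β) := by positivity
      calc 5 * (N : ℝ) ^ ((1 : ℝ) - 4 * β) * (q : ℝ) ^ 3
          ≤ 5 * (N : ℝ) ^ ((1 : ℝ) - 4 * β) * (125 * (N : ℝ) ^ (3 : ℝ)) := by
            apply mul_le_mul_of_nonneg_left hq3 hpos
        _ = 625 * ((N : ℝ) ^ (3 : ℝ) * (N : ℝ) ^ ((1 : ℝ) - 4 * β)) := by ring
        _ = 625 * (N : ℝ) ^ ((4 : ℝ) - 4 * β) := by rw [hpow3]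
        _ < (q : ℝ) ^ 3 * (C.card : ℝ) := hcube
        _ = (C.card : ℝ) * (q : ℝ) ^ 3 := by ring
    exact lt_of_mul_lt_mul_right hfinal (pow_nonneg (Nat.cast_nonneg q) 3)
  · -- symmetry
    intro c hc
    simp only [hCdef, Finset.mem_filter, Finset.mem_univ, true_and] at hc ⊢
    constructor
    · have : -c + u = u - c := by ring
      rw [this]; exact hc.2
    · have : u - -c = c + u := by ring
      rw [this]; exact hc.1
  · -- translate
    refine ⟨-(2 * u + x), ?_⟩
    intro s hs
    rw [Finset.mem_add] at hs
    obtain ⟨c1, hc1, c2, hc2, rfl⟩ := hs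
    simp only [hCdef, Finset.mem_filter, Finset.mem_univ, true_and] at hc1 hc2
    obtain ⟨hc1B, hc1A⟩ := hEB _ hc1.1
    obtain ⟨hc2B, _⟩ := hEB _ hc2.1
    rw [hA'def] at hc1A
    rw [hB'def] at hc2B
    obtain ⟨a0, ha0, ha0eq⟩ := Finset.mem_image.mp hc1A
    obtain ⟨b0, hb0, hb0eq⟩ := Finset.mem_image.mp hc2B
    refine Finset.mem_image.mpr ⟨((a0 + b0 : ℤ) : ZMod q), ?_, ?_⟩
    · exact Finset.mem_image.mpr ⟨a0 + b0, Finset.add_mem_add ha0 hb0, rfl⟩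
    · push_cast
      rw [ha0eq, hb0eq]
      ring
end

section
/- Let C ⊆ ℤ/mℤ be symmetric with |C|^{k-1} > m^{k-2} and suppose every constant sequence solution count is at most |C|^{k+1} while the total solution count is at least |C|^{2k}/m^{k-2}. Then there exist y₁,...,y_k, z₁,...,z_k ∈ C such that setting x_i = y_i - z_i, the sequence x₁,...,x_k is a k-term arithmetic progression modulo m that is not constant. -/
lemma ap_of_second_diff (m k : ℕ) (hk : 3 ≤ k) (x : Fin k → ZMod m)
    (h : ∀ n (hn : n + 2 < k),
      x ⟨n + 2, hn⟩ - x ⟨n + 1, by omega⟩ = x ⟨n + 1, by omega⟩ - x ⟨n, by omega⟩) :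
    ∃ d : ZMod m, ∀ i : Fin k, x i = x ⟨0, by omega⟩ + (i : ℕ) * d := by
  refine ⟨x ⟨1, by omega⟩ - x ⟨0, by omega⟩, ?_⟩
  have step : ∀ n (hn : n + 1 < k),
      x ⟨n + 1, hn⟩ - x ⟨n, by omega⟩ = x ⟨1, by omega⟩ - x ⟨0, by omega⟩ := by
    intro n
    induction n with
    | zero => intro hn; rfl
    | succ n ih =>
      intro hn
      have h2 := h n hn
      have := ih (by omega)
      rw [h2, this]
  have main : ∀ n (hn : n < k),
      x ⟨n, hn⟩ = x ⟨0, by omega⟩ + (n : ZMod m) * (x ⟨1, by omega⟩ - x ⟨0, by omega⟩) := by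
    intro n
    induction n with
    | zero => intro hn; simp
    | succ n ih =>
      intro hn
      have hs := step n hn
      have hi := ih (by omega)
      have : x ⟨n + 1, hn⟩ = x ⟨n, by omega⟩ + (x ⟨1, by omega⟩ - x ⟨0, by omega⟩) := by
        rw [← hs]; ring
      rw [this, hi]
      push_cast
      ring
  intro i
  have := main i.val i.isLt
  simpa using this

open Classical in
theorem exists_nonconstant_ap_solution (m k : ℕ) (hm : 0 < m) (hk : 3 ≤ k)
    (C : Finset (ZMod m)) (hsym : ∀ c ∈ C, -c ∈ C)
    (hcard : m ^ (k - 2) < C.card ^ (k - 1))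
    (htriv :
      (((Fintype.piFinset fun _ : Fin k => C) ×ˢ (Fintype.piFinset fun _ : Fin k => C)).filter
        (fun p => ∀ i : Fin k,
          p.1 i - p.2 i = p.1 ⟨0, by omega⟩ - p.2 ⟨0, by omega⟩)).card ≤ C.card ^ (k + 1))
    (hlow : (C.card : ℝ) ^ (2 * k) / (m : ℝ) ^ (k - 2) ≤
      (((Fintype.piFinset fun _ : Fin k => C) ×ˢ (Fintype.piFinset fun _ : Fin k => C)).filter
        (fun p => ∀ i : Fin k, ∀ h : (i : ℕ) + 2 < k,
          p.1 i + p.1 ⟨i + 2, h⟩ - 2 * p.1 ⟨i + 1, by omega⟩ =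
            p.2 i + p.2 ⟨i + 2, h⟩ - 2 * p.2 ⟨i + 1, by omega⟩)).card) :
    ∃ y z : Fin k → ZMod m, (∀ i, y i ∈ C) ∧ (∀ i, z i ∈ C) ∧
      (∃ d : ZMod m, ∀ i : Fin k,
        y i - z i = (y ⟨0, by omega⟩ - z ⟨0, by omega⟩) + (i : ℕ) * d) ∧
      ¬ (∀ i j : Fin k, y i - z i = y j - z j) := by
  classical
  set P := (Fintype.piFinset fun _ : Fin k => C) ×ˢ (Fintype.piFinset fun _ : Fin k => C)
  set T := P.filter (fun p => ∀ i : Fin k,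
      p.1 i - p.2 i = p.1 ⟨0, by omega⟩ - p.2 ⟨0, by omega⟩) with hT
  set S := P.filter (fun p => ∀ i : Fin k, ∀ h : (i : ℕ) + 2 < k,
      p.1 i + p.1 ⟨i + 2, h⟩ - 2 * p.1 ⟨i + 1, by omega⟩ =
        p.2 i + p.2 ⟨i + 2, h⟩ - 2 * p.2 ⟨i + 1, by omega⟩) with hS
  -- T ⊆ S
  have hTS : T ⊆ S := by
    intro p hp
    rw [hT, Finset.mem_filter] at hp
    rw [hS, Finset.mem_filter]
    refine ⟨hp.1, ?_⟩
    intro i h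
    have h1 := hp.2 i
    have h2 := hp.2 ⟨(i : ℕ) + 2, h⟩
    have h3 := hp.2 ⟨(i : ℕ) + 1, by omega⟩
    linear_combination h1 + h2 - 2 * h3
  -- card positivity
  have hCpos : 0 < C.card := by
    by_contra h
    push_neg at h
    interval_cases hc : C.card
    · have : (0 : ℕ) ^ (k - 1) = 0 := by
        apply zero_pow
        omega
      omega
  have hmpos : (0 : ℝ) < (m : ℝ) ^ (k - 2) := by positivity
  -- T.card < S.card
  have hcardlt : T.card < S.card := by
    have h1 : ((C.card : ℝ)) ^ (k + 1) * (m : ℝ) ^ (k - 2) < (C.card : ℝ) ^ (2 * k) := by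
      have h2 : ((m : ℝ)) ^ (k - 2) < (C.card : ℝ) ^ (k - 1) := by
        exact_mod_cast hcard
      have h3 : (C.card : ℝ) ^ (2 * k) = (C.card : ℝ) ^ (k + 1) * (C.card : ℝ) ^ (k - 1) := by
        rw [← pow_add]
        congr 1
        omega
      rw [h3]
      have hp : (0 : ℝ) < (C.card : ℝ) ^ (k + 1) := by positivity
      exact (mul_lt_mul_iff_right₀ hp).mpr h2
    have h4 : ((C.card : ℝ)) ^ (k + 1) < (C.card : ℝ) ^ (2 * k) / (m : ℝ) ^ (k - 2) := by
      rw [lt_div_iff₀ hmpos]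
      exact h1
    have h5 : ((T.card : ℝ)) < (S.card : ℝ) := by
      calc (T.card : ℝ) ≤ (C.card : ℝ) ^ (k + 1) := by exact_mod_cast htriv
        _ < (C.card : ℝ) ^ (2 * k) / (m : ℝ) ^ (k - 2) := h4
        _ ≤ S.card := hlow
    exact_mod_cast h5
  -- get p ∈ S \ T
  have hns : ¬ S ⊆ T := fun h => absurd (Finset.card_le_card h) (by omega)
  obtain ⟨p, hpS, hpT⟩ := Finset.not_subset.mp hns
  rw [hS, Finset.mem_filter] at hpS
  obtain ⟨hpP, hpAP⟩ := hpS
  rw [Finset.mem_product] at hpP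
  have hy : ∀ i, p.1 i ∈ C := by
    have := hpP.1
    rw [Fintype.mem_piFinset] at this
    exact this
  have hz : ∀ i, p.2 i ∈ C := by
    have := hpP.2
    rw [Fintype.mem_piFinset] at this
    exact this
  refine ⟨p.1, p.2, hy, hz, ?_, ?_⟩
  · -- AP
    apply ap_of_second_diff m k hk
    intro n hn
    have := hpAP ⟨n, by omega⟩ hn
    linear_combination this
  · -- nonconstant
    intro hcon
    apply hpT
    rw [hT, Finset.mem_filter]
    refine ⟨by rw [Finset.mem_product]; exact hpP, ?_⟩
    intro i
    exact hcon i ⟨0, by omega⟩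
end
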